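/- arXiv:2312.01400 — 3 statements merged into one kernel-verified Lean document; each statement's English description precedes it below -/
import Mathlib

section
/- Let A and B be real tensors of order m and dimension n and q ∈ ℝ^n. If (x̄, ȳ) is a solution of HTCP(A,B,q), then (x̄, ȳ) is a solution of HLCP(∇(A x̄^{m-1}), ∇(B ȳ^{m-1}), (m−1)q); that is, x̄ ∧ ȳ = 0 and (∇(A x̄^{m-1})) x̄ − (∇(B ȳ^{m-1})) ȳ = (m−1)q. -/
/-! Every component of `x ↦ A x^{m-1}` is homogeneous of degree `m - 1`, so Euler's identity
gives `∇(A x^{m-1}) x = (m - 1) A x^{m-1}`. Subtracting the identities for `A` at `x̄` and for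
`B` at `ȳ` turns the HTCP equation, multiplied by `m - 1`, into the linearized one. -/

open Finset

/-- A real tensor of order `m` and dimension `n`, indexed by a first index in `Fin n`
and `m - 1` further indices in `Fin n`. -/
abbrev Tensor (m n : ℕ) : Type := Fin n → (Fin (m - 1) → Fin n) → ℝ

/-- `tApp A x` is the vector `A x^{m-1}` with `i`-th component
`∑_{i₂,…,i_m} a_{i i₂ … i_m} x_{i₂} ⋯ x_{i_m}`. -/
noncomputable def tApp {m n : ℕ} (A : Tensor m n) (x : Fin n → ℝ) : Fin n → ℝ :=
  fun i => ∑ j : Fin (m - 1) → Fin n, A i j * ∏ k, x (j k)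

/-- The identity tensor: entries `1` when all indices coincide, `0` otherwise,
so that `tApp (idT m n) x = x^{[m-1]}`. -/
def idT (m n : ℕ) : Tensor m n :=
  fun i j => if (∀ k, j k = i) then 1 else 0

/-- The solution set of the horizontal tensor complementarity problem HTCP(A,B,q). -/
def SOL {m n : ℕ} (A B : Tensor m n) (q : Fin n → ℝ) :
    Set ((Fin n → ℝ) × (Fin n → ℝ)) :=
  {p | p.1 ⊓ p.2 = 0 ∧ tApp A p.1 - tApp B p.2 = q}

/-- `{A,B}` is an R0 tensor pair. -/
def R0Pair {m n : ℕ} (A B : Tensor m n) : Prop :=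
  ∀ x y : Fin n → ℝ, x ⊓ y = 0 → tApp A x - tApp B y = 0 → x = 0 ∧ y = 0

/-- `{A,B}` is a P tensor pair. -/
def PPair {m n : ℕ} (A B : Tensor m n) : Prop :=
  ∀ x y : Fin n → ℝ, x * y ≤ 0 → tApp A x - tApp B y = 0 → x = 0 ∧ y = 0

theorem HasFDerivAt.apply_self_eq_smul_of_homogeneous {𝕜 E F : Type*} [NontriviallyNormedField 𝕜]
    [NormedAddCommGroup E] [NormedSpace 𝕜 E] [NormedAddCommGroup F] [NormedSpace 𝕜 F]
    {f : E → F} {f' : E →L[𝕜] F} {x : E} {k : ℕ} (hf : HasFDerivAt f f' x)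
    (hom : ∀ t : 𝕜, f (t • x) = t ^ k • f x) : f' x = (k : 𝕜) • f x := by
  have hray : HasDerivAt (fun t : 𝕜 => f (t • x)) (f' x) 1 := by
    have hline : HasDerivAt (fun t : 𝕜 => t • x) x 1 := by
      simpa using (hasDerivAt_id (1 : 𝕜)).smul_const x
    rw [← one_smul 𝕜 x] at hf
    exact hf.comp_hasDerivAt 1 hline
  have hpow : HasDerivAt (fun t : 𝕜 => f (t • x)) ((k : 𝕜) • f x) 1 := by
    simp_rw [hom]
    simpa using (hasDerivAt_pow k (1 : 𝕜)).smul_const (f x)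
  exact hray.unique hpow

theorem tApp_smul {m n : ℕ} (A : Tensor m n) (t : ℝ) (x : Fin n → ℝ) :
    tApp A (t • x) = t ^ (m - 1) • tApp A x := by
  funext i
  simp [tApp, prod_mul_distrib, mul_sum, mul_left_comm]

theorem differentiable_tApp {m n : ℕ} (A : Tensor m n) : Differentiable ℝ (tApp A) := by
  unfold tApp
  fun_prop

theorem fderiv_tApp_apply_self {m n : ℕ} (A : Tensor m n) (x : Fin n → ℝ) :
    fderiv ℝ (tApp A) x x = ((m - 1 : ℕ) : ℝ) • tApp A x :=
  ((differentiable_tApp A x).hasFDerivAt).apply_self_eq_smul_of_homogeneous (tApp_smul A · x)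

theorem htcp_sol_solves_linearized_hlcp_general (m n : ℕ)
    (A B : Tensor m n) (q xb yb : Fin n → ℝ) (hsol : (xb, yb) ∈ SOL A B q) :
    xb ⊓ yb = 0 ∧
      fderiv ℝ (tApp A) xb xb - fderiv ℝ (tApp B) yb yb = ((m - 1 : ℕ) : ℝ) • q := by
  obtain ⟨hcompl, heq⟩ := hsol
  refine ⟨hcompl, ?_⟩
  rw [fderiv_tApp_apply_self, fderiv_tApp_apply_self, ← smul_sub, heq]

/-- a solution of HTCP(A,B,q) solves the linearized
HLCP(∇(A x̄^{m-1}), ∇(B ȳ^{m-1}), (m-1)q). -/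
theorem htcp_sol_solves_linearized_hlcp (m n : ℕ) (hm : 2 ≤ m) (hn : 1 ≤ n)
    (A B : Tensor m n) (q xb yb : Fin n → ℝ) (hsol : (xb, yb) ∈ SOL A B q) :
    xb ⊓ yb = 0 ∧
      fderiv ℝ (tApp A) xb xb - fderiv ℝ (tApp B) yb yb = ((m - 1 : ℕ) : ℝ) • q :=
  htcp_sol_solves_linearized_hlcp_general m n A B q xb yb hsol
end

section
/- Let m be even, let B be a real tensor of order m and dimension n, let 𝓘 be the identity tensor of order m and dimension n, and let q ∈ ℝ^n. Then (x,y) ∈ ℝ^n × ℝ^n is a solution of HTCP(𝓘,B,q) if and only if x^{[m-1]} = B y^{m-1} + q and y is a solution of TCP(B,q). -/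
/-!
Since `m - 1` is odd, `t ↦ t ^ (m - 1)` is strictly increasing and fixes `0`, so
`x ∧ y = 0` holds exactly when `y ∧ x^{[m-1]} = 0`. With `x^{[m-1]} = B y^{m-1} + q` this is the
complementarity condition of TCP(B,q), whose sign conditions it already implies.
-/

open Finset

/-- `x` solves the tensor complementarity problem TCP(B,q). -/
def TCPsol {m n : ℕ} (B : Tensor m n) (q x : Fin n → ℝ) : Prop :=
  0 ≤ x ∧ 0 ≤ tApp B x + q ∧ x ⊓ (tApp B x + q) = 0

theorem tApp_idT {m n : ℕ} (x : Fin n → ℝ) : tApp (idT m n) x = fun i => x i ^ (m - 1) := by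
  funext i
  rw [tApp, Finset.sum_eq_single (fun _ => i)]
  · simp [idT]
  · intro j _ hj
    rw [idT, if_neg (fun h => hj (funext h)), zero_mul]
  · simp

theorem TCPsol_iff_inf_eq_zero {m n : ℕ} (B : Tensor m n) (q y : Fin n → ℝ) :
    TCPsol B q y ↔ y ⊓ (tApp B y + q) = 0 :=
  ⟨fun h => h.2.2, fun h => ⟨h ▸ inf_le_left, h ▸ inf_le_right, h⟩⟩

theorem StrictMono.min_apply_eq_zero_iff {α : Type*} [LinearOrder α] [Zero α] {f : α → α}
    (hf : StrictMono f) (hf0 : f 0 = 0) (a b : α) : min (f a) b = 0 ↔ min a b = 0 := by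
  have hzero : f a = 0 ↔ a = 0 := by simpa only [hf0] using hf.injective.eq_iff (a := a) (b := 0)
  have hnonneg : 0 ≤ f a ↔ 0 ≤ a := by simpa only [hf0] using hf.le_iff_le (a := 0) (b := a)
  rw [min_eq_iff, min_eq_iff]
  constructor
  · rintro (⟨ha, hab⟩ | ⟨rfl, hba⟩)
    · exact Or.inl ⟨hzero.mp ha, hzero.mp ha ▸ ha ▸ hab⟩
    · exact Or.inr ⟨rfl, hnonneg.mp hba⟩
  · rintro (⟨rfl, hab⟩ | ⟨rfl, hba⟩)
    · exact Or.inl ⟨hf0, hf0.symm ▸ hab⟩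
    · exact Or.inr ⟨rfl, hnonneg.mpr hba⟩

theorem Pi.inf_comp_eq_zero_iff {ι α : Type*} [LinearOrder α] [Zero α] {f : α → α}
    (hf : StrictMono f) (hf0 : f 0 = 0) (x y : ι → α) :
    (fun i => f (x i)) ⊓ y = 0 ↔ x ⊓ y = 0 := by
  simp only [funext_iff, Pi.inf_apply, Pi.zero_apply, hf.min_apply_eq_zero_iff hf0]

theorem htcp_id_iff_tcp_general (m n : ℕ) (hm : 2 ≤ m) (hme : Even m)
    (B : Tensor m n) (q x y : Fin n → ℝ) :
    (x, y) ∈ SOL (idT m n) B q ↔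
      ((fun i => x i ^ (m - 1)) = tApp B y + q ∧ TCPsol B q y) := by
  have hodd : Odd (m - 1) := Nat.Even.sub_odd (by omega) hme odd_one
  simp only [SOL, Set.mem_ofPred_eq, tApp_idT, sub_eq_iff_eq_add', TCPsol_iff_inf_eq_zero]
  rw [and_comm]
  refine and_congr_right fun hx => ?_
  rw [← hx, inf_comm y, Pi.inf_comp_eq_zero_iff hodd.strictMono_pow (zero_pow (by omega))]

/-- for even `m`, `(x,y)` solves HTCP(𝓘,B,q) iff
`x^{[m-1]} = B y^{m-1} + q` and `y` solves TCP(B,q). -/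
theorem htcp_id_iff_tcp (m n : ℕ) (hm : 2 ≤ m) (hn : 1 ≤ n) (hme : Even m)
    (B : Tensor m n) (q x y : Fin n → ℝ) :
    (x, y) ∈ SOL (idT m n) B q ↔
      ((fun i => x i ^ (m - 1)) = tApp B y + q ∧ TCPsol B q y) :=
  htcp_id_iff_tcp_general m n hm hme B q x y
end

section
/- Let m be even, let A and B be real tensors of order m and dimension n, and let M be an invertible n×n real matrix that is an order-2 left inverse of A, i.e. M(A x^{m-1}) = x^{[m-1]} for all x ∈ ℝ^n. Then {A,B} is a P tensor pair if and only if the tensor MB is a P tensor, i.e. for all y ∈ ℝ^n, y * M(B y^{m-1}) ≤ 0 implies y = 0. -/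
/-!
Because `m - 1` is odd, `t ↦ t ^ (m - 1)` is a sign-preserving bijection of `ℝ`. Applying the
invertible `M`, the equation `A x^{m-1} = B y^{m-1}` becomes `x^{[m-1]} = M B y^{m-1}`, so the pairs
`(x, y)` solving it correspond exactly to the vectors `y`, with `x = (M B y^{m-1})^{[1/(m-1)]}`;
and the sign condition `x * y ≤ 0` is the same as `y * M B y^{m-1} ≤ 0`.
-/

open Finset

open Filter in
theorem Odd.pow_surjective {k : ℕ} (hk : Odd k) : Function.Surjective fun x : ℝ => x ^ k := by
  have h_top : Tendsto (fun x : ℝ => x ^ k) atTop atTop := tendsto_pow_atTop (Nat.ne_of_odd_add hk)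
  refine (continuous_pow k).surjective h_top ?_
  have h_bot : Tendsto (fun x : ℝ => -(-x) ^ k) atBot atBot :=
    tendsto_neg_atTop_atBot.comp (h_top.comp tendsto_neg_atBot_atTop)
  simpa only [hk.neg_pow, neg_neg] using h_bot

theorem Odd.pow_mul_nonpos_iff {R : Type*} [Ring R] [LinearOrder R] [IsStrictOrderedRing R]
    {k : ℕ} (hk : Odd k) {x y : R} : x ^ k * y ≤ 0 ↔ x * y ≤ 0 := by
  obtain ⟨j, rfl⟩ := hk
  rcases eq_or_ne x 0 with rfl | hx
  · simp
  have hpos : 0 < x ^ (2 * j) := (even_two_mul j).pow_pos hx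
  rw [pow_succ, mul_assoc]
  exact ⟨(nonpos_of_mul_nonpos_right · hpos), mul_nonpos_of_nonneg_of_nonpos hpos.le⟩

theorem Odd.pi_pow_mul_nonpos_iff {ι R : Type*} [Ring R] [LinearOrder R] [IsStrictOrderedRing R]
    {k : ℕ} (hk : Odd k) {x y : ι → R} : (fun i => x i ^ k) * y ≤ 0 ↔ x * y ≤ 0 := by
  simp only [Pi.le_def, Pi.mul_apply, Pi.zero_apply, hk.pow_mul_nonpos_iff]

theorem tApp_zero {m n : ℕ} (hm : m - 1 ≠ 0) (B : Tensor m n) : tApp B 0 = 0 := by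
  funext i
  simp [tApp, zero_pow hm]

theorem tApp_eq_tApp_iff_of_leftInverse {m n : ℕ} {A B : Tensor m n}
    {M : Matrix (Fin n) (Fin n) ℝ} (hM : IsUnit M)
    (hleft : ∀ x : Fin n → ℝ, M.mulVec (tApp A x) = fun i => x i ^ (m - 1)) (x y : Fin n → ℝ) :
    tApp A x = tApp B y ↔ (fun i => x i ^ (m - 1)) = M.mulVec (tApp B y) := by
  rw [← hleft x]
  exact (Matrix.mulVec_injective_iff_isUnit.2 hM).eq_iff.symm

theorem pPair_iff_MB_pTensor_general (m n : ℕ) (hm : 2 ≤ m) (hme : Even m)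
    (A B : Tensor m n) (M : Matrix (Fin n) (Fin n) ℝ) (hMinv : IsUnit M)
    (hleft : ∀ x : Fin n → ℝ, M.mulVec (tApp A x) = fun i => x i ^ (m - 1)) :
    PPair A B ↔ ∀ y : Fin n → ℝ, y * M.mulVec (tApp B y) ≤ 0 → y = 0 := by
  have hodd : Odd (m - 1) := Nat.Even.sub_odd (by omega) hme odd_one
  have hsolve := tApp_eq_tApp_iff_of_leftInverse (B := B) hMinv hleft
  constructor
  · intro hP y hy
    obtain ⟨x, hx : (fun i => x i ^ (m - 1)) = M.mulVec (tApp B y)⟩ :=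
      hodd.pow_surjective.comp_left (M.mulVec (tApp B y))
    have hAB : tApp A x = tApp B y := (hsolve x y).2 hx
    have hxy : x * y ≤ 0 := by rwa [← hodd.pi_pow_mul_nonpos_iff, hx, mul_comm]
    exact (hP x y hxy (sub_eq_zero.2 hAB)).2
  · intro hMB x y hxy hAB
    have hpow := (hsolve x y).1 (sub_eq_zero.1 hAB)
    obtain rfl : y = 0 := hMB y (by rwa [← hpow, mul_comm, hodd.pi_pow_mul_nonpos_iff])
    rw [tApp_zero (by omega), Matrix.mulVec_zero] at hpow
    exact ⟨funext fun i => pow_eq_zero_iff (by omega) |>.1 (congrFun hpow i), rfl⟩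

/-- for even `m`, if `M` is an invertible order-2 left inverse of `A`,
then `{A,B}` is a P tensor pair iff the tensor `MB` is a P tensor. -/
theorem pPair_iff_MB_pTensor (m n : ℕ) (hm : 2 ≤ m) (hn : 1 ≤ n) (hme : Even m)
    (A B : Tensor m n) (M : Matrix (Fin n) (Fin n) ℝ) (hMinv : IsUnit M)
    (hleft : ∀ x : Fin n → ℝ, M.mulVec (tApp A x) = fun i => x i ^ (m - 1)) :
    PPair A B ↔ ∀ y : Fin n → ℝ, y * M.mulVec (tApp B y) ≤ 0 → y = 0 :=
  pPair_iff_MB_pTensor_general m n hm hme A B M hMinv hleft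
end
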